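/- arXiv:1405.7012 — 3 statements merged into one kernel-verified Lean document; each statement's English description precedes it below -/
import Mathlib

section
/- Let (μ_n) be a sequence of probability measures on ℝ with characteristic functions φ_n, and let μ be a probability measure with characteristic function φ. If φ_n(t) → φ(t) for every real t, then μ_n converges weakly to μ (Lévy Continuity Theorem, hard direction). -/
open MeasureTheory Filter Topology

noncomputable def cdf' (μ : Measure ℝ) (x : ℝ) : ℝ := (μ (Set.Iic x)).toReal

def WeakConv (μs : ℕ → Measure ℝ) (μ : Measure ℝ) : Prop :=
  ∀ x : ℝ, ContinuousAt (cdf' μ) x →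
    Tendsto (fun n => cdf' (μs n) x) atTop (𝓝 (cdf' μ x))

noncomputable def charFun' (μ : Measure ℝ) (t : ℝ) : ℂ :=
  ∫ x, Complex.exp (t * x * Complex.I) ∂μ

section LevyAux

open Real Set
open scoped ENNReal

noncomputable def gk (b r : ℝ) : ℝ := Real.sqrt (b/π) * Real.exp (-b * r^2)

lemma gk_nonneg (b r : ℝ) : 0 ≤ gk b r :=
  mul_nonneg (Real.sqrt_nonneg _) (Real.exp_pos _).le

lemma gk_le' {b : ℝ} (hb : 0 < b) (r : ℝ) : gk b r ≤ Real.sqrt (b/π) := by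
  calc gk b r ≤ Real.sqrt (b/π) * 1 :=
        mul_le_mul_of_nonneg_left (Real.exp_le_one_iff.2 (by nlinarith [sq_nonneg r])) (Real.sqrt_nonneg _)
    _ = _ := mul_one _

lemma gk_cont (b : ℝ) : Continuous (gk b) := by
  unfold gk; continuity

lemma gk_integrable {b : ℝ} (hb : 0 < b) : Integrable (gk b) :=
  (integrable_exp_neg_mul_sq hb).const_mul _

lemma gk_integral {b : ℝ} (hb : 0 < b) : ∫ r, gk b r = 1 := by
  unfold gk
  rw [integral_const_mul, integral_gaussian, ← Real.sqrt_mul (by positivity)]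
  rw [show b/π * (π/b) = 1 by field_simp]
  exact Real.sqrt_one

lemma norm_exp_I (t x : ℝ) : ‖Complex.exp (t * x * Complex.I)‖ = 1 := by
  rw [Complex.norm_exp]
  simp

lemma charFun'_norm_le_one (ν : Measure ℝ) [IsProbabilityMeasure ν] (t : ℝ) :
    ‖charFun' ν t‖ ≤ 1 := by
  calc ‖charFun' ν t‖ ≤ ∫ x, ‖Complex.exp (t * x * Complex.I)‖ ∂ν := norm_integral_le_integral_norm _
    _ = 1 := by
      simp only [norm_exp_I]
      simp

lemma charFun'_continuous (ν : Measure ℝ) [IsProbabilityMeasure ν] :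
    Continuous (charFun' ν) := by
  unfold charFun'
  refine continuous_of_dominated (F := fun (t x : ℝ) => Complex.exp (t * x * Complex.I))
    (bound := fun _ => 1) (μ := ν) (fun t => ?_) (fun t => ?_) (integrable_const 1) ?_
  · exact (Complex.continuous_exp.comp (by continuity)).aestronglyMeasurable
  · exact Eventually.of_forall fun x => (norm_exp_I t x).le
  · exact Eventually.of_forall fun x => Complex.continuous_exp.comp (by continuity)

noncomputable def Kk (ν : Measure ℝ) (b u : ℝ) : ℝ := ∫ y, gk b (u - y) ∂ν

lemma gk_shift_integrable (ν : Measure ℝ) [IsProbabilityMeasure ν] {b : ℝ} (hb : 0 < b) (u : ℝ) :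
    Integrable (fun y => gk b (u - y)) ν := by
  refine Integrable.mono' (integrable_const (Real.sqrt (b/π)))
    ((gk_cont b).comp (by continuity)).aestronglyMeasurable
    (Eventually.of_forall fun y => ?_)
  rw [Real.norm_eq_abs, abs_of_nonneg (gk_nonneg _ _)]
  exact gk_le' hb _

lemma Kk_nonneg (ν : Measure ℝ) (b u : ℝ) : 0 ≤ Kk ν b u :=
  integral_nonneg fun y => gk_nonneg _ _

lemma Kk_le (ν : Measure ℝ) [IsProbabilityMeasure ν] {b : ℝ} (hb : 0 < b) (u : ℝ) :
    Kk ν b u ≤ Real.sqrt (b/π) := by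
  calc Kk ν b u ≤ ∫ _, Real.sqrt (b/π) ∂ν :=
        integral_mono (gk_shift_integrable ν hb u) (integrable_const _) (fun y => gk_le' hb _)
    _ = Real.sqrt (b/π) := by simp

lemma Kk_continuous (ν : Measure ℝ) [IsProbabilityMeasure ν] {b : ℝ} (hb : 0 < b) :
    Continuous (Kk ν b) := by
  refine continuous_of_dominated (bound := fun _ => Real.sqrt (b/π))
    (fun u => ((gk_cont b).comp (by continuity)).aestronglyMeasurable)
    (fun u => Eventually.of_forall fun y => ?_) (integrable_const _) ?_
  · rw [Real.norm_eq_abs, abs_of_nonneg (gk_nonneg _ _)]; exact gk_le' hb _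
  · exact Eventually.of_forall fun y => (gk_cont b).comp (by continuity)

lemma gauss_fourier {b : ℝ} (hb : 0 < b) (c : ℝ) :
    (∫ t : ℝ, Complex.exp (((-t^2/(4*b) : ℝ) : ℂ) + t * c * Complex.I))
      = (Real.sqrt (4*π*b) : ℂ) * Complex.exp (((-b * c^2 : ℝ) : ℂ)) := by
  have hb' : (b:ℂ) ≠ 0 := Complex.ofReal_ne_zero.2 hb.ne'
  have hB : ((-(4*b)⁻¹ : ℝ) : ℂ).re < 0 := by
    simp only [Complex.ofReal_re]
    rw [neg_lt, neg_zero]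
    positivity
  have key := integral_cexp_quadratic hB ((c:ℂ) * Complex.I) 0
  have h1 : (fun (x:ℝ) => Complex.exp (((-(4*b)⁻¹:ℝ):ℂ) * x^2 + ((c:ℂ)*Complex.I) * x + 0))
      = fun (x:ℝ) => Complex.exp (((-x^2/(4*b) : ℝ) : ℂ) + x * c * Complex.I) := by
    funext x
    congr 1
    push_cast
    ring
  rw [h1] at key
  rw [key]
  congr 1
  · rw [show (↑π / -((-(4*b)⁻¹:ℝ):ℂ)) = ((4*π*b : ℝ):ℂ) by
      push_cast
      field_simp]
    rw [show ((1:ℂ)/2) = ((1/2:ℝ):ℂ) by norm_num, ← Complex.ofReal_cpow (by positivity)]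
    rw [Real.sqrt_eq_rpow]
  · congr 1
    rw [mul_pow, Complex.I_sq]
    push_cast
    field_simp
    ring

noncomputable def Kc (ν : Measure ℝ) (b u : ℝ) : ℂ :=
  (2*π : ℂ)⁻¹ * ∫ t : ℝ, Complex.exp (((-t^2/(4*b) : ℝ) : ℂ) + t * u * Complex.I) * charFun' ν (-t)

lemma sqrt_const_eq {b : ℝ} (hb : 0 < b) : (2*π)⁻¹ * Real.sqrt (4*π*b) = Real.sqrt (b/π) := by
  rw [show (4*π*b : ℝ) = (2*π)^2 * (b/π) by field_simp; ring,
    Real.sqrt_mul (by positivity), Real.sqrt_sq (by positivity), ← mul_assoc,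
    inv_mul_cancel₀ (by positivity), one_mul]

lemma Kc_eq (ν : Measure ℝ) [IsProbabilityMeasure ν] {b : ℝ} (hb : 0 < b) (u : ℝ) :
    Kc ν b u = ((Kk ν b u : ℝ) : ℂ) := by
  set F : ℝ → ℝ → ℂ := fun t y =>
    Complex.exp (((-t^2/(4*b) : ℝ) : ℂ)) * Complex.exp (((t*(u-y) : ℝ) : ℂ) * Complex.I) with hF
  have hFcont : Continuous (Function.uncurry F) := by
    apply Continuous.mul
    · apply Complex.continuous_exp.comp
      apply Complex.continuous_ofReal.comp
      continuity
    · apply Complex.continuous_exp.comp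
      apply Continuous.mul _ continuous_const
      apply Complex.continuous_ofReal.comp
      continuity
  have hFnorm : ∀ t y, ‖F t y‖ = Real.exp (-(4*b)⁻¹ * t^2) := by
    intro t y
    rw [hF]
    simp only [norm_mul, Complex.norm_exp_ofReal, Complex.norm_exp_ofReal_mul_I,
      mul_one]
    rw [Real.exp_eq_exp]
    field_simp
  have hint : Integrable (Function.uncurry F) (volume.prod ν) := by
    apply Integrable.mono'
      (((integrable_exp_neg_mul_sq (show (0:ℝ) < (4*b)⁻¹ by positivity)).mul_prod
        (integrable_const (1:ℝ))) : Integrable (fun z : ℝ × ℝ => Real.exp (-(4*b)⁻¹ * z.1^2) * 1) _)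
      hFcont.aestronglyMeasurable
    refine Eventually.of_forall fun z => ?_
    rw [mul_one]
    exact (hFnorm z.1 z.2).le
  have h1 : ∀ t : ℝ, Complex.exp (((-t^2/(4*b) : ℝ) : ℂ) + t * u * Complex.I) * charFun' ν (-t)
      = ∫ y, F t y ∂ν := by
    intro t
    unfold charFun'
    rw [← integral_const_mul]
    congr 1
    funext y
    rw [hF]
    simp only
    rw [← Complex.exp_add, ← Complex.exp_add]
    congr 1
    push_cast
    ring
  have h2 : ∀ y : ℝ, (∫ t, F t y) = ((Real.sqrt (4*π*b) * Real.exp (-b * (u-y)^2) : ℝ) : ℂ) := by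
    intro y
    have : (fun t : ℝ => F t y)
        = fun t : ℝ => Complex.exp (((-t^2/(4*b) : ℝ) : ℂ) + (t:ℂ) * ((u - y : ℝ) : ℂ) * Complex.I) := by
      funext t
      rw [hF]
      simp only
      rw [← Complex.exp_add]
      congr 1
      push_cast
      ring
    rw [this, gauss_fourier hb (u - y)]
    push_cast [Complex.ofReal_exp]
    ring
  unfold Kc
  simp_rw [h1]
  rw [integral_integral_swap hint]
  simp_rw [h2]
  rw [show (∫ y, ((Real.sqrt (4*π*b) * Real.exp (-b * (u-y)^2) : ℝ) : ℂ) ∂ν)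
      = (((∫ y, Real.sqrt (4*π*b) * Real.exp (-b * (u-y)^2) ∂ν : ℝ)) : ℂ) from integral_ofReal]
  have h3 : Kk ν b u = Real.sqrt (b/π) * ∫ y, Real.exp (-b * (u-y)^2) ∂ν := by
    unfold Kk gk
    rw [integral_const_mul]
  rw [show ∀ z : ℂ, (2*π:ℂ)⁻¹ * z = (((2*π)⁻¹ : ℝ) : ℂ) * z by intro z; push_cast; ring]
  rw [← Complex.ofReal_mul, h3]
  congr 1
  rw [integral_const_mul, ← mul_assoc, sqrt_const_eq hb]

lemma norm_exp_aux (b t u : ℝ) :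
    ‖Complex.exp (((-t^2/(4*b) : ℝ) : ℂ) + t * u * Complex.I)‖ = Real.exp (-(4*b)⁻¹ * t^2) := by
  rw [Complex.norm_exp]
  have : (((-t^2/(4*b) : ℝ) : ℂ) + t * u * Complex.I).re = -(4*b)⁻¹ * t^2 := by
    have h0 : ((t:ℂ) * u * Complex.I).re = 0 := by simp [Complex.mul_re]
    rw [Complex.add_re, h0, add_zero, Complex.ofReal_re]
    ring
  rw [this]

lemma Kc_tendsto (μs : ℕ → Measure ℝ) (μ : Measure ℝ)
    [∀ n, IsProbabilityMeasure (μs n)] [IsProbabilityMeasure μ]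
    (h : ∀ t : ℝ, Tendsto (fun n => charFun' (μs n) t) atTop (𝓝 (charFun' μ t)))
    {b : ℝ} (hb : 0 < b) (u : ℝ) :
    Tendsto (fun n => Kc (μs n) b u) atTop (𝓝 (Kc μ b u)) := by
  unfold Kc
  apply Tendsto.const_mul
  apply tendsto_integral_of_dominated_convergence (fun t => Real.exp (-(4*b)⁻¹ * t^2))
  · intro n
    apply Continuous.aestronglyMeasurable
    apply Continuous.mul
    · exact Complex.continuous_exp.comp (by continuity)
    · exact (charFun'_continuous (μs n)).comp continuous_neg
  · exact integrable_exp_neg_mul_sq (by positivity)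
  · intro n
    refine Eventually.of_forall fun t => ?_
    rw [norm_mul, norm_exp_aux]
    calc Real.exp (-(4*b)⁻¹ * t^2) * ‖charFun' (μs n) (-t)‖
        ≤ Real.exp (-(4*b)⁻¹ * t^2) * 1 :=
          mul_le_mul_of_nonneg_left (charFun'_norm_le_one _ _) (Real.exp_pos _).le
      _ = _ := mul_one _
  · exact Eventually.of_forall fun t => Tendsto.const_mul _ (h (-t))

lemma Kk_tendsto (μs : ℕ → Measure ℝ) (μ : Measure ℝ)
    [∀ n, IsProbabilityMeasure (μs n)] [IsProbabilityMeasure μ]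
    (h : ∀ t : ℝ, Tendsto (fun n => charFun' (μs n) t) atTop (𝓝 (charFun' μ t)))
    {b : ℝ} (hb : 0 < b) (u : ℝ) :
    Tendsto (fun n => Kk (μs n) b u) atTop (𝓝 (Kk μ b u)) := by
  have h1 := (Complex.continuous_re.tendsto (Kc μ b u)).comp (Kc_tendsto μs μ h hb u)
  simp only [Function.comp_def, Kc_eq _ hb, Complex.ofReal_re] at h1
  exact h1

noncomputable def Jr (ν : Measure ℝ) (b a c : ℝ) : ℝ := ∫ u in Set.Ioc a c, Kk ν b u

lemma Jr_tendsto (μs : ℕ → Measure ℝ) (μ : Measure ℝ)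
    [∀ n, IsProbabilityMeasure (μs n)] [IsProbabilityMeasure μ]
    (h : ∀ t : ℝ, Tendsto (fun n => charFun' (μs n) t) atTop (𝓝 (charFun' μ t)))
    {b : ℝ} (hb : 0 < b) (a c : ℝ) :
    Tendsto (fun n => Jr (μs n) b a c) atTop (𝓝 (Jr μ b a c)) := by
  haveI : IsFiniteMeasure (volume.restrict (Set.Ioc a c)) :=
    ⟨by rw [Measure.restrict_apply_univ]; exact measure_Ioc_lt_top⟩
  unfold Jr
  apply tendsto_integral_of_dominated_convergence (fun _ => Real.sqrt (b/π))
  · exact fun n => (Kk_continuous (μs n) hb).aestronglyMeasurable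
  · exact integrable_const _
  · intro n
    refine Eventually.of_forall fun u => ?_
    rw [Real.norm_eq_abs, abs_of_nonneg (Kk_nonneg _ _ _)]
    exact Kk_le _ hb u
  · exact Eventually.of_forall fun u => Kk_tendsto μs μ h hb u

noncomputable def wfun (b a c y : ℝ) : ℝ := ∫ u in Set.Ioc a c, gk b (u - y)

lemma uncurry_int (ν : Measure ℝ) [IsProbabilityMeasure ν] {b : ℝ} (hb : 0 < b) (a c : ℝ) :
    Integrable (Function.uncurry fun u y => gk b (u - y))
      ((volume.restrict (Set.Ioc a c)).prod ν) := by
  haveI : IsFiniteMeasure (volume.restrict (Set.Ioc a c)) :=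
    ⟨by rw [Measure.restrict_apply_univ]; exact measure_Ioc_lt_top⟩
  apply Integrable.mono' (integrable_const (Real.sqrt (b/π)))
  · exact ((gk_cont b).comp (continuous_fst.sub continuous_snd)).aestronglyMeasurable
  · refine Eventually.of_forall fun z => ?_
    rw [Function.uncurry, Real.norm_eq_abs, abs_of_nonneg (gk_nonneg _ _)]
    exact gk_le' hb _

lemma Jr_eq (ν : Measure ℝ) [IsProbabilityMeasure ν] {b : ℝ} (hb : 0 < b) (a c : ℝ) :
    Jr ν b a c = ∫ y, wfun b a c y ∂ν := by
  unfold Jr Kk wfun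
  exact integral_integral_swap (uncurry_int ν hb a c)

lemma wfun_integrable (ν : Measure ℝ) [IsProbabilityMeasure ν] {b : ℝ} (hb : 0 < b) (a c : ℝ) :
    Integrable (wfun b a c) ν := by
  have := (uncurry_int ν hb a c).integral_prod_right
  exact this

noncomputable def eta (b δ : ℝ) : ℝ := 1 - ∫ r in Set.Ioc (-δ) δ, gk b r

lemma setint_le_one {b : ℝ} (hb : 0 < b) (s : Set ℝ) : ∫ r in s, gk b r ≤ 1 := by
  rw [← gk_integral hb]
  exact setIntegral_le_integral (gk_integrable hb) (Eventually.of_forall fun r => gk_nonneg _ _)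

lemma eta_nonneg {b : ℝ} (hb : 0 < b) (δ : ℝ) : 0 ≤ eta b δ := by
  have := setint_le_one hb (Set.Ioc (-δ) δ)
  unfold eta; linarith

lemma eta_partition {b : ℝ} (hb : 0 < b) {δ : ℝ} (hδ : 0 < δ) :
    (∫ r in Set.Iic (-δ), gk b r) + (∫ r in Set.Ioi δ, gk b r) = eta b δ := by
  have h1 : (∫ r in Set.Iic (-δ), gk b r) + (∫ r in Set.Ioi (-δ), gk b r) = 1 := by
    have h0 := integral_add_compl (measurableSet_Iic (a := (-δ:ℝ))) (gk_integrable hb)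
    rw [Set.compl_Iic, gk_integral hb] at h0
    exact h0
  have h2 : (∫ r in Set.Ioi (-δ), gk b r)
      = (∫ r in Set.Ioc (-δ) δ, gk b r) + (∫ r in Set.Ioi δ, gk b r) := by
    rw [← Set.Ioc_union_Ioi_eq_Ioi (by linarith : (-δ:ℝ) ≤ δ)]
    refine setIntegral_union ?_ measurableSet_Ioi
      ((gk_integrable hb).integrableOn) ((gk_integrable hb).integrableOn)
    rw [Set.disjoint_left]
    intro r hr hr'
    exact absurd hr.2 (not_le.2 hr')
  unfold eta
  linarith

lemma tail_Ioi_le_eta {b : ℝ} (hb : 0 < b) {δ : ℝ} (hδ : 0 < δ) :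
    ∫ r in Set.Ioi δ, gk b r ≤ eta b δ := by
  have := eta_partition hb hδ
  have h2 : 0 ≤ ∫ r in Set.Iic (-δ), gk b r :=
    setIntegral_nonneg measurableSet_Iic fun r _ => gk_nonneg _ _
  linarith

lemma tail_Iic_le_eta {b : ℝ} (hb : 0 < b) {δ : ℝ} (hδ : 0 < δ) :
    ∫ r in Set.Iic (-δ), gk b r ≤ eta b δ := by
  have := eta_partition hb hδ
  have h2 : 0 ≤ ∫ r in Set.Ioi δ, gk b r :=
    setIntegral_nonneg measurableSet_Ioi fun r _ => gk_nonneg _ _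
  linarith

lemma wfun_eq (b a c y : ℝ) : wfun b a c y = ∫ r in Set.Ioc (a - y) (c - y), gk b r := by
  unfold wfun
  rcases le_or_gt a c with hac | hac
  · rw [← intervalIntegral.integral_of_le hac,
      intervalIntegral.integral_comp_sub_right (fun r => gk b r) y,
      intervalIntegral.integral_of_le (by linarith)]
  · rw [Set.Ioc_eq_empty (by exact not_lt.2 hac.le), Set.Ioc_eq_empty (by simp; linarith)]
    simp

lemma wfun_nonneg (b a c y : ℝ) : 0 ≤ wfun b a c y :=
  setIntegral_nonneg measurableSet_Ioc fun r _ => gk_nonneg _ _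

lemma wfun_le_one {b : ℝ} (hb : 0 < b) (a c y : ℝ) : wfun b a c y ≤ 1 := by
  rw [wfun_eq]; exact setint_le_one hb _

lemma wfun_ge {b : ℝ} (hb : 0 < b) {δ : ℝ} (hδ : 0 < δ) {a c y : ℝ}
    (hy : y ∈ Set.Icc (a + δ) (c - δ)) : 1 - eta b δ ≤ wfun b a c y := by
  rw [wfun_eq]
  have h1 : Set.Ioc (-δ) δ ⊆ Set.Ioc (a - y) (c - y) :=
    Set.Ioc_subset_Ioc (by linarith [hy.1]) (by linarith [hy.2])
  have h2 : (∫ r in Set.Ioc (-δ) δ, gk b r) ≤ ∫ r in Set.Ioc (a - y) (c - y), gk b r :=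
    setIntegral_mono_set ((gk_integrable hb).integrableOn)
      (Eventually.of_forall fun r => gk_nonneg _ _) (HasSubset.Subset.eventuallyLE h1)
  unfold eta
  linarith

lemma wfun_le_left {b : ℝ} (hb : 0 < b) {δ : ℝ} (hδ : 0 < δ) {a c y : ℝ}
    (hy : y < a - δ) : wfun b a c y ≤ eta b δ := by
  rw [wfun_eq]
  have h1 : Set.Ioc (a - y) (c - y) ⊆ Set.Ioi δ :=
    fun r hr => by simp only [Set.mem_Ioi]; have := hr.1; simp at this ⊢; linarith
  calc (∫ r in Set.Ioc (a - y) (c - y), gk b r) ≤ ∫ r in Set.Ioi δ, gk b r :=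
        setIntegral_mono_set ((gk_integrable hb).integrableOn)
          (Eventually.of_forall fun r => gk_nonneg _ _) (HasSubset.Subset.eventuallyLE h1)
    _ ≤ eta b δ := tail_Ioi_le_eta hb hδ

lemma wfun_le_right {b : ℝ} (hb : 0 < b) {δ : ℝ} (hδ : 0 < δ) {a c y : ℝ}
    (hy : c + δ < y) : wfun b a c y ≤ eta b δ := by
  rw [wfun_eq]
  have h1 : Set.Ioc (a - y) (c - y) ⊆ Set.Iic (-δ) :=
    fun r hr => by simp only [Set.mem_Iic]; have := hr.2; linarith
  calc (∫ r in Set.Ioc (a - y) (c - y), gk b r) ≤ ∫ r in Set.Iic (-δ), gk b r :=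
        setIntegral_mono_set ((gk_integrable hb).integrableOn)
          (Eventually.of_forall fun r => gk_nonneg _ _) (HasSubset.Subset.eventuallyLE h1)
    _ ≤ eta b δ := tail_Iic_le_eta hb hδ

lemma toReal_le_one (ν : Measure ℝ) [IsProbabilityMeasure ν] (s : Set ℝ) :
    (ν s).toReal ≤ 1 := by
  have h : ν s ≤ 1 := prob_le_one
  calc (ν s).toReal ≤ (1 : ℝ≥0∞).toReal := ENNReal.toReal_mono ENNReal.one_ne_top h
    _ = 1 := by simp

lemma Jr_le_measure (ν : Measure ℝ) [IsProbabilityMeasure ν] {b : ℝ} (hb : 0 < b)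
    {δ : ℝ} (hδ : 0 < δ) (a c : ℝ) :
    Jr ν b a c ≤ (ν (Set.Icc (a - δ) (c + δ))).toReal + eta b δ := by
  rw [Jr_eq ν hb a c]
  have hle : ∀ y, wfun b a c y
      ≤ Set.indicator (Set.Icc (a - δ) (c + δ)) ((1 : ℝ → ℝ)) y + eta b δ := by
    intro y
    by_cases hy : y ∈ Set.Icc (a - δ) (c + δ)
    · rw [Set.indicator_of_mem hy, Pi.one_apply]
      have := wfun_le_one hb a c y
      have := eta_nonneg hb δ
      linarith
    · rw [Set.indicator_of_notMem hy, zero_add]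
      rw [Set.mem_Icc, not_and_or, not_le, not_le] at hy
      rcases hy with hy | hy
      · exact wfun_le_left hb hδ hy
      · exact wfun_le_right hb hδ hy
  have hind : Integrable (Set.indicator (Set.Icc (a - δ) (c + δ)) ((1 : ℝ → ℝ))) ν :=
    (integrable_const (1:ℝ)).indicator measurableSet_Icc
  calc (∫ y, wfun b a c y ∂ν)
      ≤ ∫ y, (Set.indicator (Set.Icc (a - δ) (c + δ)) ((1 : ℝ → ℝ)) y + eta b δ) ∂ν :=
        integral_mono (wfun_integrable ν hb a c) (hind.add (integrable_const _)) hle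
    _ = (ν (Set.Icc (a - δ) (c + δ))).toReal + eta b δ := by
        rw [integral_add hind (integrable_const _), integral_indicator_one measurableSet_Icc]
        simp [measureReal_def]

lemma measure_le_Jr (ν : Measure ℝ) [IsProbabilityMeasure ν] {b : ℝ} (hb : 0 < b)
    {δ : ℝ} (hδ : 0 < δ) (a c : ℝ) :
    (ν (Set.Icc (a + δ) (c - δ))).toReal - eta b δ ≤ Jr ν b a c := by
  rw [Jr_eq ν hb a c]
  have hle : ∀ y, (1 - eta b δ) * Set.indicator (Set.Icc (a + δ) (c - δ)) ((1 : ℝ → ℝ)) y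
      ≤ wfun b a c y := by
    intro y
    by_cases hy : y ∈ Set.Icc (a + δ) (c - δ)
    · rw [Set.indicator_of_mem hy, Pi.one_apply, mul_one]
      exact wfun_ge hb hδ hy
    · rw [Set.indicator_of_notMem hy, mul_zero]
      exact wfun_nonneg b a c y
  have h1 : (1 - eta b δ) * (ν (Set.Icc (a + δ) (c - δ))).toReal ≤ ∫ y, wfun b a c y ∂ν := by
    have hind : Integrable (Set.indicator (Set.Icc (a + δ) (c - δ)) ((1 : ℝ → ℝ))) ν :=
      (integrable_const (1:ℝ)).indicator measurableSet_Icc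
    have := integral_mono (hind.const_mul (1 - eta b δ)) (wfun_integrable ν hb a c) hle
    rwa [integral_const_mul, integral_indicator_one measurableSet_Icc, measureReal_def] at this
  have h2 := toReal_le_one ν (Set.Icc (a + δ) (c - δ))
  have h3 := eta_nonneg hb δ
  have h4 := ENNReal.toReal_nonneg (a := ν (Set.Icc (a + δ) (c - δ)))
  nlinarith

lemma gauss_moment {b : ℝ} (hb : 0 < b) :
    ∫ r in Set.Ioi (0:ℝ), r * Real.exp (-b * r^2) = (2*b)⁻¹ := by
  have hc := integral_mul_cexp_neg_mul_sq (b := (b:ℂ)) (by simpa using hb)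
  have he : ∀ r : ℝ, (r:ℂ) * Complex.exp (-(b:ℂ) * (r:ℂ)^2)
      = ((r * Real.exp (-b * r^2) : ℝ) : ℂ) := by
    intro r
    rw [Complex.ofReal_mul, Complex.ofReal_exp]
    push_cast
    ring
  simp_rw [he] at hc
  rw [show (∫ r in Set.Ioi (0:ℝ), ((r * Real.exp (-b*r^2) : ℝ):ℂ))
    = ((∫ r in Set.Ioi (0:ℝ), r * Real.exp (-b*r^2) : ℝ) : ℂ) from integral_ofReal] at hc
  rw [show ((2:ℂ)*(b:ℂ))⁻¹ = (((2*b)⁻¹ : ℝ):ℂ) by push_cast; ring] at hc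
  exact_mod_cast hc

lemma tail_bound {b δ : ℝ} (hb : 0 < b) (hδ : 0 < δ) :
    ∫ r in Set.Ioi δ, gk b r ≤ Real.sqrt (b/π) * (δ⁻¹ * (2*b)⁻¹) := by
  unfold gk
  rw [integral_const_mul]
  apply mul_le_mul_of_nonneg_left _ (Real.sqrt_nonneg _)
  have h1 : ∫ r in Set.Ioi δ, Real.exp (-b * r^2)
      ≤ ∫ r in Set.Ioi δ, δ⁻¹ * (r * Real.exp (-b * r^2)) := by
    refine setIntegral_mono_on ((integrable_exp_neg_mul_sq hb).integrableOn)
      (((integrable_mul_exp_neg_mul_sq hb).integrableOn).const_mul _) measurableSet_Ioi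
      (fun r hr => ?_)
    rw [Set.mem_Ioi] at hr
    have he := Real.exp_pos (-b * r^2)
    rw [show δ⁻¹ * (r * Real.exp (-b * r^2)) = (δ⁻¹ * r) * Real.exp (-b * r^2) by ring]
    have h1r : 1 ≤ δ⁻¹ * r := by
      rw [← inv_mul_cancel₀ hδ.ne']
      exact mul_le_mul_of_nonneg_left hr.le (inv_pos.2 hδ).le
    nlinarith [he, h1r]
  have h2 : ∫ r in Set.Ioi δ, δ⁻¹ * (r * Real.exp (-b * r^2))
      = δ⁻¹ * ∫ r in Set.Ioi δ, r * Real.exp (-b * r^2) := integral_const_mul _ _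
  have h3 : ∫ r in Set.Ioi δ, r * Real.exp (-b * r^2)
      ≤ ∫ r in Set.Ioi (0:ℝ), r * Real.exp (-b * r^2) := by
    refine setIntegral_mono_set ((integrable_mul_exp_neg_mul_sq hb).integrableOn)
      ?_ (HasSubset.Subset.eventuallyLE (Set.Ioi_subset_Ioi hδ.le))
    filter_upwards [ae_restrict_mem measurableSet_Ioi] with r hr
    have : (0:ℝ) < r := hr
    positivity
  rw [gauss_moment hb] at h3
  calc ∫ r in Set.Ioi δ, Real.exp (-b * r^2)
      ≤ δ⁻¹ * ∫ r in Set.Ioi δ, r * Real.exp (-b * r^2) := by rw [← h2]; exact h1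
    _ ≤ δ⁻¹ * (2*b)⁻¹ := by
        apply mul_le_mul_of_nonneg_left h3 (by positivity)

lemma eta_sym {b : ℝ} (hb : 0 < b) (δ : ℝ) :
    ∫ r in Set.Iic (-δ), gk b r = ∫ r in Set.Ioi δ, gk b r := by
  have heven : (fun r : ℝ => gk b (-r)) = gk b := funext fun r => by unfold gk; rw [neg_sq]
  have h := integral_comp_neg_Iic (-δ) (gk b)
  rw [neg_neg] at h
  rw [← h]
  simp_rw [show ∀ r : ℝ, gk b (-r) = gk b r from fun r => congrFun heven r]

lemma eta_small {δ ε : ℝ} (hδ : 0 < δ) (hε : 0 < ε) : ∃ b : ℝ, 0 < b ∧ eta b δ < ε := by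
  have hπ := Real.pi_pos
  set b := (π * ε^2 * δ^2)⁻¹ + 1 with hbdef
  have hb : 0 < b := by positivity
  refine ⟨b, hb, ?_⟩
  have h2 : eta b δ = 2 * ∫ r in Set.Ioi δ, gk b r := by
    have hp := eta_partition hb hδ
    rw [eta_sym hb δ] at hp
    linarith
  have h3 := tail_bound hb hδ
  have e1 : 2 * (Real.sqrt (b/π) * (δ⁻¹ * (2*b)⁻¹)) = Real.sqrt (b/π) * b⁻¹ * δ⁻¹ := by
    field_simp
  have e2 : Real.sqrt (b/π) * b⁻¹ = Real.sqrt ((π*b)⁻¹) := by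
    rw [show (π*b)⁻¹ = (b/π) * (b⁻¹)^2 by field_simp,
      Real.sqrt_mul (by positivity), Real.sqrt_sq (by positivity)]
  have h5 : (π*b)⁻¹ < (ε*δ)^2 := by
    have hgt : 1 < (ε*δ)^2 * (π*b) := by
      have hexp : (ε*δ)^2 * (π*b) = 1 + ε^2*δ^2*π := by
        rw [hbdef]
        field_simp
      rw [hexp]
      nlinarith
    rw [inv_eq_one_div, div_lt_iff₀ (mul_pos hπ hb)]
    exact hgt
  have e3 : Real.sqrt ((π*b)⁻¹) < ε * δ :=
    calc Real.sqrt ((π*b)⁻¹) < Real.sqrt ((ε*δ)^2) := Real.sqrt_lt_sqrt (by positivity) h5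
      _ = ε*δ := Real.sqrt_sq (by positivity)
  have e4 : Real.sqrt ((π*b)⁻¹) * δ⁻¹ < ε := by
    have := mul_lt_mul_of_pos_right e3 (inv_pos.2 hδ)
    rwa [mul_assoc, mul_inv_cancel₀ hδ.ne', mul_one] at this
  calc eta b δ = 2 * ∫ r in Set.Ioi δ, gk b r := h2
    _ ≤ 2 * (Real.sqrt (b/π) * (δ⁻¹ * (2*b)⁻¹)) := by linarith
    _ = Real.sqrt ((π*b)⁻¹) * δ⁻¹ := by rw [e1, ← e2]
    _ < ε := e4

lemma toReal_compl (ν : Measure ℝ) [IsProbabilityMeasure ν] {s : Set ℝ} (hs : MeasurableSet s) :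
    (ν sᶜ).toReal = 1 - (ν s).toReal := by
  rw [measure_compl hs (measure_ne_top ν s), measure_univ,
    ENNReal.toReal_sub_of_le prob_le_one ENNReal.one_ne_top, ENNReal.toReal_one]

lemma toReal_mono' (ν : Measure ℝ) [IsProbabilityMeasure ν] {s t : Set ℝ} (h : s ⊆ t) :
    (ν s).toReal ≤ (ν t).toReal :=
  ENNReal.toReal_mono (measure_ne_top ν t) (measure_mono h)

lemma toReal_union_le (ν : Measure ℝ) [IsProbabilityMeasure ν] (s t : Set ℝ) :
    (ν (s ∪ t)).toReal ≤ (ν s).toReal + (ν t).toReal := by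
  calc (ν (s ∪ t)).toReal ≤ (ν s + ν t).toReal :=
        ENNReal.toReal_mono (ENNReal.add_ne_top.2 ⟨measure_ne_top ν s, measure_ne_top ν t⟩)
          (measure_union_le s t)
    _ = (ν s).toReal + (ν t).toReal :=
        ENNReal.toReal_add (measure_ne_top ν s) (measure_ne_top ν t)

lemma exists_upper (μ : Measure ℝ) [IsProbabilityMeasure μ] {ε : ℝ} (hε : 0 < ε) :
    ∃ B : ℝ, (μ (Set.Ioi B)).toReal < ε := by
  have h1 : Tendsto (fun y => (μ (Set.Iic y)).toReal) atTop (𝓝 1) := by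
    have h0 := tendsto_measure_Iic_atTop (μ := μ)
    rw [measure_univ] at h0
    have h2 := (ENNReal.tendsto_toReal ENNReal.one_ne_top).comp h0
    simpa [Function.comp_def] using h2
  obtain ⟨B, hB⟩ := (h1.eventually (eventually_gt_nhds (by linarith : (1:ℝ) - ε < 1))).exists
  refine ⟨B, ?_⟩
  have hc : (μ (Set.Ioi B)).toReal = 1 - (μ (Set.Iic B)).toReal := by
    rw [← Set.compl_Iic, toReal_compl μ measurableSet_Iic]
  linarith

lemma exists_lower (μ : Measure ℝ) [IsProbabilityMeasure μ] {ε : ℝ} (hε : 0 < ε) :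
    ∃ A : ℝ, (μ (Set.Iic A)).toReal < ε := by
  have h1 : Tendsto (fun y => (μ (Set.Ici y)).toReal) atBot (𝓝 1) := by
    have h0 := tendsto_measure_Ici_atBot (μ := μ)
    rw [measure_univ] at h0
    have h2 := (ENNReal.tendsto_toReal ENNReal.one_ne_top).comp h0
    simpa [Function.comp_def] using h2
  obtain ⟨A', hA'⟩ := (h1.eventually (eventually_gt_nhds (by linarith : (1:ℝ) - ε < 1))).exists
  refine ⟨A' - 1, ?_⟩
  have hsub : Set.Iic (A' - 1) ⊆ (Set.Ici A')ᶜ := by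
    intro y hy
    simp only [Set.mem_compl_iff, Set.mem_Ici, not_le]
    rw [Set.mem_Iic] at hy
    linarith
  calc (μ (Set.Iic (A' - 1))).toReal ≤ (μ ((Set.Ici A')ᶜ)).toReal := toReal_mono' μ hsub
    _ = 1 - (μ (Set.Ici A')).toReal := toReal_compl μ measurableSet_Ici
    _ < ε := by linarith

theorem levy_continuity' (μs : ℕ → Measure ℝ) (μ : Measure ℝ)
    [∀ n, IsProbabilityMeasure (μs n)] [IsProbabilityMeasure μ]
    (h : ∀ t : ℝ, Tendsto (fun n => charFun' (μs n) t) atTop (𝓝 (charFun' μ t)))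
    (x : ℝ) (hx : ContinuousAt (cdf' μ) x) :
    Tendsto (fun n => cdf' (μs n) x) atTop (𝓝 (cdf' μ x)) := by
  rw [Metric.continuousAt_iff] at hx
  apply tendsto_order.2
  constructor
  · intro z hz
    set ε := (cdf' μ x - z)/5 with hεdef
    have hε : 0 < ε := by rw [hεdef]; linarith
    obtain ⟨d, hd, hcont⟩ := hx ε hε
    set δ := d/4 with hδdef
    have hδ : 0 < δ := by positivity
    obtain ⟨A0, hA0⟩ := exists_lower μ hε
    set a := min (A0 - δ) (x - 4*δ) with hadef
    obtain ⟨b, hb, hη⟩ := eta_small hδ hε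
    have hlim := Jr_tendsto μs μ h hb a (x - δ)
    have hev := hlim.eventually (eventually_gt_nhds
      (show Jr μ b a (x-δ) - ε < Jr μ b a (x-δ) by linarith))
    filter_upwards [hev] with n hn
    have s1 : (μs n (Set.Icc (a - δ) x)).toReal ≤ cdf' (μs n) x :=
      toReal_mono' _ (fun y hy => hy.2)
    have s2 : Jr (μs n) b a (x - δ) ≤ (μs n (Set.Icc (a - δ) x)).toReal + eta b δ := by
      have h2 := Jr_le_measure (μs n) hb hδ a (x - δ)
      rwa [show x - δ + δ = x by ring] at h2
    have s3 : (μ (Set.Icc (a + δ) (x - 2*δ))).toReal - eta b δ ≤ Jr μ b a (x - δ) := by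
      have h3 := measure_le_Jr μ hb hδ a (x - δ)
      rwa [show x - δ - δ = x - 2*δ by ring] at h3
    have s4 : cdf' μ (x - 2*δ)
        ≤ (μ (Set.Icc (a + δ) (x - 2*δ))).toReal + (μ (Set.Iic A0)).toReal := by
      have hsub : Set.Iic (x - 2*δ) ⊆ Set.Icc (a + δ) (x - 2*δ) ∪ Set.Iic A0 := by
        intro y hy
        rw [Set.mem_Iic] at hy
        rcases le_or_gt (a + δ) y with h1 | h1
        · exact Or.inl ⟨h1, hy⟩
        · refine Or.inr ?_
          rw [Set.mem_Iic]
          have ha1 : a ≤ A0 - δ := min_le_left _ _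
          linarith
      calc cdf' μ (x - 2*δ) ≤ (μ (Set.Icc (a+δ) (x-2*δ) ∪ Set.Iic A0)).toReal :=
            toReal_mono' μ hsub
        _ ≤ _ := toReal_union_le μ _ _
    have s5 : cdf' μ x - ε ≤ cdf' μ (x - 2*δ) := by
      have hdist : dist (x - 2*δ) x < d := by
        rw [Real.dist_eq, show x - 2*δ - x = -(2*δ) by ring, abs_neg,
          abs_of_nonneg (by positivity)]
        rw [hδdef]; linarith
      have hc2 := hcont hdist
      rw [Real.dist_eq] at hc2
      have := abs_lt.mp hc2
      linarith [this.1]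
    have hz5 : z = cdf' μ x - 5*ε := by rw [hεdef]; ring
    linarith
  · intro z hz
    set ε := (z - cdf' μ x)/5 with hεdef
    have hε : 0 < ε := by rw [hεdef]; linarith
    obtain ⟨d, hd, hcont⟩ := hx ε hε
    set δ := d/4 with hδdef
    have hδ : 0 < δ := by positivity
    obtain ⟨B0, hB0⟩ := exists_upper μ hε
    set c := max (B0 + δ) x with hcdef
    obtain ⟨b, hb, hη⟩ := eta_small hδ hε
    have hlim := Jr_tendsto μs μ h hb (x + 2*δ) c
    have hev := hlim.eventually (eventually_gt_nhds
      (show Jr μ b (x + 2*δ) c - ε < Jr μ b (x + 2*δ) c by linarith))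
    filter_upwards [hev] with n hn
    have t1 : (μs n (Set.Ioi x)).toReal = 1 - cdf' (μs n) x := by
      have := toReal_compl (μs n) (measurableSet_Iic (a := x))
      rwa [Set.compl_Iic] at this
    have t2 : (μs n (Set.Icc (x + δ) (c + δ))).toReal ≤ (μs n (Set.Ioi x)).toReal :=
      toReal_mono' _ (fun y hy => by
        rw [Set.mem_Ioi]
        have := hy.1
        linarith)
    have t3 : Jr (μs n) b (x + 2*δ) c
        ≤ (μs n (Set.Icc (x + δ) (c + δ))).toReal + eta b δ := by
      have h3 := Jr_le_measure (μs n) hb hδ (x + 2*δ) c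
      rwa [show x + 2*δ - δ = x + δ by ring] at h3
    have t4 : (μ (Set.Icc (x + 3*δ) (c - δ))).toReal - eta b δ ≤ Jr μ b (x + 2*δ) c := by
      have h4 := measure_le_Jr μ hb hδ (x + 2*δ) c
      rwa [show x + 2*δ + δ = x + 3*δ by ring] at h4
    have t5 : 1 - (μ (Set.Icc (x + 3*δ) (c - δ))).toReal
        ≤ cdf' μ (x + 3*δ) + (μ (Set.Ioi B0)).toReal := by
      have huniv : (Set.univ : Set ℝ)
          ⊆ Set.Icc (x+3*δ) (c-δ) ∪ (Set.Iio (x+3*δ) ∪ Set.Ioi (c-δ)) := by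
        intro y _
        rcases lt_or_ge y (x+3*δ) with h1 | h1
        · exact Or.inr (Or.inl h1)
        · rcases le_or_gt y (c-δ) with h2 | h2
          · exact Or.inl ⟨h1, h2⟩
          · exact Or.inr (Or.inr h2)
      have h1' : (1:ℝ) = (μ Set.univ).toReal := by simp
      have hm0 := toReal_mono' μ huniv
      have hun1 := toReal_union_le μ (Set.Icc (x+3*δ) (c-δ)) (Set.Iio (x+3*δ) ∪ Set.Ioi (c-δ))
      have hun := toReal_union_le μ (Set.Iio (x + 3*δ)) (Set.Ioi (c - δ))
      have hm1 : (μ (Set.Iio (x + 3*δ))).toReal ≤ cdf' μ (x + 3*δ) :=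
        toReal_mono' μ Set.Iio_subset_Iic_self
      have hm2 : (μ (Set.Ioi (c - δ))).toReal ≤ (μ (Set.Ioi B0)).toReal :=
        toReal_mono' μ (Set.Ioi_subset_Ioi (by
          have := le_max_left (B0 + δ) x
          rw [hcdef]
          linarith))
      linarith
    have t6 : cdf' μ (x + 3*δ) ≤ cdf' μ x + ε := by
      have hdist : dist (x + 3*δ) x < d := by
        rw [Real.dist_eq, show x + 3*δ - x = 3*δ by ring, abs_of_nonneg (by positivity)]
        rw [hδdef]; linarith
      have hc2 := hcont hdist
      rw [Real.dist_eq] at hc2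
      have := abs_lt.mp hc2
      linarith [this.2]
    have hz5 : z = cdf' μ x + 5*ε := by rw [hεdef]; ring
    linarith

end LevyAux

theorem levy_continuity (μs : ℕ → Measure ℝ) (μ : Measure ℝ)
    [∀ n, IsProbabilityMeasure (μs n)] [IsProbabilityMeasure μ]
    (h : ∀ t : ℝ, Tendsto (fun n => charFun' (μs n) t) atTop (𝓝 (charFun' μ t))) :
    WeakConv μs μ := by
  intro x hx
  exact levy_continuity' μs μ h x hx
end

section
/- Skorohod's Theorem: if (μ_n) is a sequence of probability measures on ℝ converging weakly to a probability measure μ, then there exist a probability space and random variables Y_n, Y on it such that Y_n has distribution μ_n, Y has distribution μ, and Y_n(ω) → Y(ω) for every ω. -/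
open MeasureTheory Filter Topology
open scoped Classical

/-! ### Auxiliary facts about `cdf'` -/

lemma cdf'_eq (μ : Measure ℝ) [IsProbabilityMeasure μ] :
    cdf' μ = ⇑(ProbabilityTheory.cdf μ) := by
  funext x
  rw [cdf', ProbabilityTheory.cdf_eq_real, measureReal_def]

lemma cdf'_mono (μ : Measure ℝ) [IsProbabilityMeasure μ] : Monotone (cdf' μ) := by
  rw [cdf'_eq]; exact (ProbabilityTheory.cdf μ).mono

lemma cdf'_tendsto_atTop (μ : Measure ℝ) [IsProbabilityMeasure μ] :
    Tendsto (cdf' μ) atTop (𝓝 1) := by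
  rw [cdf'_eq]; exact ProbabilityTheory.tendsto_cdf_atTop μ

lemma cdf'_tendsto_atBot (μ : Measure ℝ) [IsProbabilityMeasure μ] :
    Tendsto (cdf' μ) atBot (𝓝 0) := by
  rw [cdf'_eq]; exact ProbabilityTheory.tendsto_cdf_atBot μ

lemma cdf'_rightCont (μ : Measure ℝ) [IsProbabilityMeasure μ] (x : ℝ) :
    ContinuousWithinAt (cdf' μ) (Set.Ici x) x := by
  rw [cdf'_eq]; exact (ProbabilityTheory.cdf μ).right_continuous x

lemma cdf'_nonneg (μ : Measure ℝ) (x : ℝ) : 0 ≤ cdf' μ x := ENNReal.toReal_nonneg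

lemma cdf'_le_one (μ : Measure ℝ) [IsProbabilityMeasure μ] (x : ℝ) : cdf' μ x ≤ 1 := by
  have h1 : μ (Set.Iic x) ≤ 1 := prob_le_one
  have := ENNReal.toReal_mono (by simp) h1
  simpa [cdf'] using this

/-! ### The quantile function -/

noncomputable def quant (μ : Measure ℝ) (ω : ℝ) : ℝ := sInf {x | ω ≤ cdf' μ x}

section Quant

variable (μ : Measure ℝ) [IsProbabilityMeasure μ] {ω : ℝ}

lemma quant_set_nonempty (hω : ω < 1) : {x | ω ≤ cdf' μ x}.Nonempty := by
  obtain ⟨x, hx⟩ := ((cdf'_tendsto_atTop μ).eventually_const_lt hω).exists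
  exact ⟨x, hx.le⟩

lemma quant_set_bddBelow (hω : 0 < ω) : BddBelow {x | ω ≤ cdf' μ x} := by
  obtain ⟨x₀, hx₀⟩ := ((cdf'_tendsto_atBot μ).eventually_lt_const hω).exists
  refine ⟨x₀, fun y hy => ?_⟩
  by_contra hxy
  exact absurd (le_trans hy (cdf'_mono μ (le_of_not_ge hxy))) (not_le.2 hx₀)

lemma le_cdf'_quant (hω : ω ∈ Set.Ioo (0:ℝ) 1) : ω ≤ cdf' μ (quant μ ω) := by
  set S := {x | ω ≤ cdf' μ x}
  have hne := quant_set_nonempty μ hω.2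
  have hbdd := quant_set_bddBelow μ hω.1
  have key : ∀ y ∈ Set.Ioi (sInf S), ω ≤ cdf' μ y := by
    intro y hy
    obtain ⟨s, hs, hsy⟩ := exists_lt_of_csInf_lt hne hy
    exact le_trans hs (cdf'_mono μ hsy.le)
  have hcont : Tendsto (cdf' μ) (𝓝[Set.Ioi (sInf S)] (sInf S)) (𝓝 (cdf' μ (sInf S))) :=
    (cdf'_rightCont μ (sInf S)).tendsto.mono_left
      (nhdsWithin_mono _ Set.Ioi_subset_Ici_self)
  exact ge_of_tendsto hcont (eventually_mem_nhdsWithin.mono key)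

lemma quant_le_iff (hω : ω ∈ Set.Ioo (0:ℝ) 1) {x : ℝ} :
    quant μ ω ≤ x ↔ ω ≤ cdf' μ x := by
  constructor
  · intro hx
    exact le_trans (le_cdf'_quant μ hω) (cdf'_mono μ hx)
  · intro hx
    exact csInf_le (quant_set_bddBelow μ hω.1) hx

lemma cdf'_lt_of_lt_quant (hω : 0 < ω) {x : ℝ} (hx : x < quant μ ω) : cdf' μ x < ω := by
  by_contra hc
  exact absurd (csInf_le (quant_set_bddBelow μ hω) (not_lt.1 hc)) (not_le.2 hx)

lemma quant_mono (hω : ω ∈ Set.Ioo (0:ℝ) 1) {ω' : ℝ} (hω' : ω' ∈ Set.Ioo (0:ℝ) 1)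
    (hle : ω ≤ ω') : quant μ ω ≤ quant μ ω' :=
  csInf_le_csInf (quant_set_bddBelow μ hω.1) (quant_set_nonempty μ hω'.2)
    (fun x hx => le_trans hle hx)

end Quant

/-! ### Distribution of the truncated quantile -/

lemma quant_piecewise_measurable (μ : Measure ℝ) [IsProbabilityMeasure μ]
    {G : Set ℝ} (hGm : MeasurableSet G) (hG : G ⊆ Set.Ioo 0 1) :
    Measurable (G.piecewise (quant μ) (fun _ => (0:ℝ))) := by
  apply measurable_of_Iic
  intro t
  rw [Set.piecewise_preimage]
  have h1 : quant μ ⁻¹' Set.Iic t ∩ G = Set.Iic (cdf' μ t) ∩ G := by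
    ext ω
    simp only [Set.mem_inter_iff, Set.mem_preimage, Set.mem_Iic, and_congr_left_iff]
    intro hωG
    exact quant_le_iff μ (hG hωG)
  show MeasurableSet (quant μ ⁻¹' Set.Iic t ∩ G ∪ (fun _ : ℝ => (0:ℝ)) ⁻¹' Set.Iic t \ G)
  rw [h1]
  exact (measurableSet_Iic.inter hGm).union
    ((measurable_const measurableSet_Iic).diff hGm)

lemma volume_Ioo_inter_Iic {a : ℝ} (h0 : 0 ≤ a) (h1 : a ≤ 1) :
    volume (Set.Ioo (0:ℝ) 1 ∩ Set.Iic a) = ENNReal.ofReal a := by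
  rcases eq_or_lt_of_le h1 with rfl | hlt
  · have : Set.Ioo (0:ℝ) 1 ∩ Set.Iic 1 = Set.Ioo 0 1 := by
      ext x; simp only [Set.mem_inter_iff, Set.mem_Ioo, Set.mem_Iic]
      exact ⟨fun h => h.1, fun h => ⟨h, h.2.le⟩⟩
    rw [this, Real.volume_Ioo]; norm_num
  · have : Set.Ioo (0:ℝ) 1 ∩ Set.Iic a = Set.Ioc 0 a := by
      ext x; simp only [Set.mem_inter_iff, Set.mem_Ioo, Set.mem_Iic, Set.mem_Ioc]
      exact ⟨fun h => ⟨h.1.1, h.2⟩, fun h => ⟨⟨h.1, lt_of_le_of_lt h.2 hlt⟩, h.2⟩⟩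
    rw [this, Real.volume_Ioc]; norm_num

lemma quant_piecewise_map (μ : Measure ℝ) [IsProbabilityMeasure μ]
    {G : Set ℝ} (hGm : MeasurableSet G) (hG : G ⊆ Set.Ioo 0 1)
    (hnull : volume (Set.Ioo (0:ℝ) 1 \ G) = 0) :
    (volume.restrict (Set.Ioo (0:ℝ) 1)).map (G.piecewise (quant μ) (fun _ => (0:ℝ))) = μ := by
  set Z := G.piecewise (quant μ) (fun _ => (0:ℝ)) with hZ
  have hZm := quant_piecewise_measurable μ hGm hG
  refine Measure.ext_of_Iic _ _ (fun t => ?_)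
  rw [Measure.map_apply hZm measurableSet_Iic,
    Measure.restrict_apply (hZm measurableSet_Iic)]
  set A : Set ℝ := Z ⁻¹' Set.Iic t ∩ Set.Ioo 0 1 with hA
  set T : Set ℝ := Set.Ioo (0:ℝ) 1 ∩ Set.Iic (cdf' μ t) with hT
  have hae : A =ᵐ[volume] T := by
    rw [Filter.eventuallyEq_set]
    have key : ∀ ω ∈ G, (ω ∈ A ↔ ω ∈ T) := by
      intro ω hωG
      have hωI := hG hωG
      simp only [hA, hT, Set.mem_inter_iff, Set.mem_preimage, Set.mem_Iic, hZ,
        Set.piecewise_eq_of_mem _ _ _ hωG]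
      rw [quant_le_iff μ hωI]
      tauto
    have hsub : {ω | ¬ (ω ∈ A ↔ ω ∈ T)} ⊆ Set.Ioo 0 1 \ G := by
      intro ω hω
      simp only [Set.mem_setOf_eq] at hω
      by_contra hc
      simp only [Set.mem_diff, not_and, not_not] at hc
      by_cases hI : ω ∈ Set.Ioo (0:ℝ) 1
      · exact hω (key ω (hc hI))
      · exact hω ⟨fun hm => absurd hm.2 hI, fun hm => absurd hm.1 hI⟩
    have := measure_mono_null hsub hnull
    filter_upwards [measure_eq_zero_iff_ae_notMem.mp this] with ω hω
    by_contra hc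
    exact hω hc
  rw [measure_congr hae, hT, volume_Ioo_inter_Iic (cdf'_nonneg μ t) (cdf'_le_one μ t),
    cdf', ENNReal.ofReal_toReal (measure_ne_top μ _)]

/-! ### The good set -/

/-- `ω` is a good point if the quantile of `μ` is right-continuous at `ω` within `(0,1)`. -/
def GoodPt (μ : Measure ℝ) (ω : ℝ) : Prop :=
  ∀ ε > 0, ∃ ω', ω < ω' ∧ ω' < 1 ∧ quant μ ω' < quant μ ω + ε

lemma bad_countable (μ : Measure ℝ) [IsProbabilityMeasure μ] :
    {ω | ω ∈ Set.Ioo (0:ℝ) 1 ∧ ¬ GoodPt μ ω}.Countable := by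
  set B := {ω | ω ∈ Set.Ioo (0:ℝ) 1 ∧ ¬ GoodPt μ ω}
  set S : ℚ → Set ℝ := fun q =>
    {ω | ω ∈ B ∧ quant μ ω < q ∧ ∀ ω', ω < ω' → ω' < 1 → (q:ℝ) < quant μ ω'}
  have hsub : B ⊆ ⋃ q : ℚ, S q := by
    intro ω hω
    obtain ⟨hωI, hbad⟩ := hω
    rw [GoodPt] at hbad
    push_neg at hbad
    obtain ⟨ε, hε, hεp⟩ := hbad
    obtain ⟨q, hq1, hq2⟩ := exists_rat_btwn (lt_add_of_pos_right (quant μ ω) hε)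
    refine Set.mem_iUnion.2 ⟨q, ⟨⟨hωI, ?_⟩, hq1, fun ω' h1 h2 => lt_of_lt_of_le hq2 (hεp ω' h1 h2)⟩⟩
    rw [GoodPt]; push_neg; exact ⟨ε, hε, hεp⟩
  refine Set.Countable.mono hsub (Set.countable_iUnion (fun q => ?_))
  apply Set.Subsingleton.countable
  intro ω₁ h₁ ω₂ h₂
  by_contra hne
  have key : ∀ a b : ℝ, a ∈ S q → b ∈ S q → a < b → False := by
    intro a b ha hb hab
    have h2lt : (q:ℝ) < quant μ b := ha.2.2 b hab hb.1.1.2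
    exact absurd hb.2.1 (not_lt.2 h2lt.le)
  rcases lt_trichotomy ω₁ ω₂ with hlt | heq | hgt
  · exact key ω₁ ω₂ h₁ h₂ hlt
  · exact hne heq
  · exact key ω₂ ω₁ h₂ h₁ hgt

/-! ### Convergence of quantiles -/

lemma quant_tendsto (μs : ℕ → Measure ℝ) (μ : Measure ℝ)
    [∀ n, IsProbabilityMeasure (μs n)] [IsProbabilityMeasure μ]
    (h : WeakConv μs μ) {ω : ℝ} (hωI : ω ∈ Set.Ioo (0:ℝ) 1) (hgood : GoodPt μ ω) :
    Tendsto (fun n => quant (μs n) ω) atTop (𝓝 (quant μ ω)) := by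
  have hdense : Dense {x | ContinuousAt (cdf' μ) x} := by
    have hcc : {x | ¬ ContinuousAt (cdf' μ) x}.Countable :=
      (cdf'_mono μ).countable_not_continuousAt
    have hd := Set.Countable.dense_compl ℝ hcc
    have he : {x | ContinuousAt (cdf' μ) x} = {x | ¬ ContinuousAt (cdf' μ) x}ᶜ := by
      ext x; simp
    rw [he]; exact hd
  rw [tendsto_order]
  constructor
  · -- lower bound
    intro x hx
    obtain ⟨t, ht, hxt, htq⟩ := hdense.exists_between hx
    have hFt : cdf' μ t < ω := cdf'_lt_of_lt_quant μ hωI.1 htq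
    filter_upwards [(h t ht).eventually_lt_const hFt] with n hn
    have : ¬ quant (μs n) ω ≤ t := by
      rw [quant_le_iff (μs n) hωI]
      exact not_le.2 hn
    exact lt_trans hxt (not_le.1 this)
  · -- upper bound
    intro x hx
    obtain ⟨ω', hωω', hω'1, hqω'⟩ := hgood (x - quant μ ω) (by linarith)
    have hqx : quant μ ω' < x := by linarith
    obtain ⟨t, ht, hq't, htx⟩ := hdense.exists_between hqx
    have hω'I : ω' ∈ Set.Ioo (0:ℝ) 1 := ⟨lt_trans hωI.1 hωω', hω'1⟩
    have hFt : ω < cdf' μ t :=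
      lt_of_lt_of_le hωω' ((quant_le_iff μ hω'I).1 hq't.le)
    filter_upwards [(h t ht).eventually_const_lt hFt] with n hn
    exact lt_of_le_of_lt ((quant_le_iff (μs n) hωI).2 hn.le) htx

/-! ### Main theorem -/

theorem skorohod (μs : ℕ → Measure ℝ) (μ : Measure ℝ)
    [∀ n, IsProbabilityMeasure (μs n)] [IsProbabilityMeasure μ]
    (h : WeakConv μs μ) :
    ∃ (Ω : Type) (_ : MeasurableSpace Ω) (P : Measure Ω) (_ : IsProbabilityMeasure P)
      (Y : ℕ → Ω → ℝ) (Y₀ : Ω → ℝ),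
      (∀ n, Measurable (Y n)) ∧ Measurable Y₀ ∧
      (∀ n, P.map (Y n) = μs n) ∧ P.map Y₀ = μ ∧
      ∀ ω, Tendsto (fun n => Y n ω) atTop (𝓝 (Y₀ ω)) := by
  obtain ⟨G, hGm, hG, hnull, hGgood⟩ :
      ∃ G : Set ℝ, MeasurableSet G ∧ G ⊆ Set.Ioo 0 1 ∧
        volume (Set.Ioo (0:ℝ) 1 \ G) = 0 ∧
        ∀ ω ∈ G, ω ∈ Set.Ioo (0:ℝ) 1 ∧ GoodPt μ ω := by
    set B := {ω | ω ∈ Set.Ioo (0:ℝ) 1 ∧ ¬ GoodPt μ ω} with hB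
    have hBc : B.Countable := bad_countable μ
    refine ⟨Set.Ioo 0 1 \ B, measurableSet_Ioo.diff hBc.measurableSet, Set.diff_subset, ?_, ?_⟩
    · apply measure_mono_null (fun ω hω => ?_) (hBc.measure_zero volume)
      simp only [Set.mem_diff, not_and, not_not] at hω
      exact hω.2 hω.1
    · rintro ω ⟨hI, hnb⟩
      refine ⟨hI, ?_⟩
      by_contra hc
      exact hnb ⟨hI, hc⟩
  set P := volume.restrict (Set.Ioo (0:ℝ) 1) with hP
  have hprob : IsProbabilityMeasure P := by
    constructor
    rw [hP, Measure.restrict_apply_univ, Real.volume_Ioo]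
    norm_num
  refine ⟨ℝ, inferInstance, P, hprob,
    fun n => G.piecewise (quant (μs n)) (fun _ => (0:ℝ)),
    G.piecewise (quant μ) (fun _ => (0:ℝ)),
    fun n => quant_piecewise_measurable (μs n) hGm hG,
    quant_piecewise_measurable μ hGm hG,
    fun n => quant_piecewise_map (μs n) hGm hG hnull,
    quant_piecewise_map μ hGm hG hnull,
    fun ω => ?_⟩
  by_cases hωG : ω ∈ G
  · simp only [Set.piecewise_eq_of_mem _ _ _ hωG]
    exact quant_tendsto μs μ h (hGgood ω hωG).1 (hGgood ω hωG).2
  · simp only [Set.piecewise_eq_of_notMem _ _ _ hωG]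
    exact tendsto_const_nhds
end

section
/- Helly's Selection Theorem: every sequence (F_n) of nondecreasing functions from ℝ to [0,1] has a subsequence (F_{n_k}) and a nondecreasing right-continuous function F : ℝ → [0,1] such that F_{n_k}(x) → F(x) at every point x where F is continuous. -/
open Filter Topology

theorem helly_selection (F : ℕ → ℝ → ℝ)
    (hmono : ∀ n, Monotone (F n))
    (hrange : ∀ n x, F n x ∈ Set.Icc (0 : ℝ) 1) :
    ∃ (φ : ℕ → ℕ) (G : ℝ → ℝ), StrictMono φ ∧ Monotone G ∧
      (∀ x, G x ∈ Set.Icc (0 : ℝ) 1) ∧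
      (∀ x, ContinuousWithinAt G (Set.Ici x) x) ∧
      (∀ x, ContinuousAt G x → Tendsto (fun k => F (φ k) x) atTop (𝓝 (G x))) := by
  -- sequential compactness of (ℚ → Icc 0 1)
  set f : ℕ → (ℚ → Set.Icc (0:ℝ) 1) := fun n q => ⟨F n (q : ℝ), hrange n q⟩ with hf
  obtain ⟨a, φ, hφ, ha⟩ := SeqCompactSpace.tendsto_subseq f
  set g : ℚ → ℝ := fun q => (a q : ℝ) with hgdef
  have hg : ∀ q : ℚ, Tendsto (fun k => F (φ k) (q : ℝ)) atTop (𝓝 (g q)) := by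
    intro q
    have h1 : Tendsto (fun k => f (φ k) q) atTop (𝓝 (a q)) :=
      (tendsto_pi_nhds.1 ha) q
    exact (continuous_subtype_val.continuousAt.tendsto.comp h1)
  have hg0 : ∀ q : ℚ, 0 ≤ g q := fun q => (a q).2.1
  have hg1 : ∀ q : ℚ, g q ≤ 1 := fun q => (a q).2.2
  have hgmono : ∀ q r : ℚ, (q : ℝ) ≤ (r : ℝ) → g q ≤ g r := by
    intro q r hqr
    exact le_of_tendsto_of_tendsto' (hg q) (hg r) (fun k => hmono (φ k) hqr)
  -- define G
  set G : ℝ → ℝ := fun x => sInf (g '' {q : ℚ | x < (q : ℝ)}) with hGdef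
  have hne : ∀ x : ℝ, (g '' {q : ℚ | x < (q : ℝ)}).Nonempty := by
    intro x
    obtain ⟨q, hq⟩ := exists_rat_gt x
    exact ⟨g q, ⟨q, hq, rfl⟩⟩
  have hbdd : ∀ x : ℝ, BddBelow (g '' {q : ℚ | x < (q : ℝ)}) := by
    intro x
    exact ⟨0, fun y ⟨q, _, hq⟩ => hq ▸ hg0 q⟩
  have hGle : ∀ (x : ℝ) (q : ℚ), x < (q : ℝ) → G x ≤ g q := by
    intro x q hq
    exact csInf_le (hbdd x) ⟨q, hq, rfl⟩
  have hleG : ∀ (x : ℝ) (c : ℝ), (∀ q : ℚ, x < (q : ℝ) → c ≤ g q) → c ≤ G x := by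
    intro x c hc
    exact le_csInf (hne x) (fun y ⟨q, hq, hq'⟩ => hq' ▸ hc q hq)
  have hGmono : Monotone G := by
    intro x y hxy
    exact hleG y (G x) (fun q hq => hGle x q (lt_of_le_of_lt hxy hq))
  have hGmem : ∀ x, G x ∈ Set.Icc (0:ℝ) 1 := by
    intro x
    obtain ⟨q, hq⟩ := exists_rat_gt x
    exact ⟨hleG x 0 (fun q hq => hg0 q), (hGle x q hq).trans (hg1 q)⟩
  have hGright : ∀ x, ContinuousWithinAt G (Set.Ici x) x := by
    intro x
    rw [ContinuousWithinAt]
    refine tendsto_order.2 ⟨?_, ?_⟩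
    · intro c hc
      filter_upwards [self_mem_nhdsWithin] with y hy
      exact lt_of_lt_of_le hc (hGmono hy)
    · intro b hb
      obtain ⟨z, ⟨q, hq, rfl⟩, hz⟩ := exists_lt_of_csInf_lt (hne x) hb
      filter_upwards [Ico_mem_nhdsGE_of_mem ⟨le_refl x, hq⟩] with y hy
      exact lt_of_le_of_lt (hGle y q hy.2) hz
  refine ⟨φ, G, hφ, hGmono, hGmem, hGright, ?_⟩
  intro x hcont
  refine tendsto_order.2 ⟨?_, ?_⟩
  · intro c hc
    -- find y < x with c < G y
    have hev : ∀ᶠ y in 𝓝 x, c < G y := hcont.eventually (eventually_gt_nhds hc)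
    rw [Metric.eventually_nhds_iff] at hev
    obtain ⟨δ, hδ, hδ'⟩ := hev
    have hy : c < G (x - δ/2) := by
      apply hδ'
      rw [Real.dist_eq]
      rw [abs_of_nonpos (by linarith)]
      linarith
    obtain ⟨r, hr1, hr2⟩ := exists_rat_btwn (show x - δ/2 < x by linarith)
    have hgr : c < g r := lt_of_lt_of_le hy (hGle _ r hr1)
    filter_upwards [(hg r).eventually_const_lt hgr] with k hk
    exact lt_of_lt_of_le hk (hmono (φ k) (le_of_lt hr2))
  · intro b hb
    obtain ⟨z, ⟨q, hq, rfl⟩, hz⟩ := exists_lt_of_csInf_lt (hne x) hb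
    filter_upwards [(hg q).eventually_lt_const hz] with k hk
    exact lt_of_le_of_lt (hmono (φ k) (le_of_lt hq)) hk
end
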